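/- Let M be a matroid on a finite linearly ordered ground set E and let A ⊆ E. Then |Q_M(A)| = |A| − r_M(A), where Q_M(A) = {e ∈ A : e = min(C) for some circuit C of M with C ⊆ A}. In particular |Q_M(A)| does not depend on the linear ordering of E. -/

import Mathlib

/-!
Scan `A` from the top of the order and keep `e` exactly when it is not spanned by the
elements of `A` above it. The kept elements form a basis of `A`: they span `A` by downward
induction, and the minimum of a circuit among them would be spanned by the rest of the circuit,
all of which lies above it. An element of `A` is the minimum of a circuit inside `A` exactly when
it is spanned by the elements of `A` above it, so `Q_M(A)` is the complement of that basis in `A`.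
-/

/-- A circuit of a matroid: a minimal dependent set. -/
def Matroid.IsCircuit' {α : Type*} (M : Matroid α) (C : Set α) : Prop :=
  M.Dep C ∧ ∀ D, M.Dep D → D ⊆ C → D = C

/-- A cocircuit of a matroid: a circuit of the dual matroid. -/
def Matroid.IsCocircuit' {α : Type*} (M : Matroid α) (C : Set α) : Prop :=
  M✶.IsCircuit' C

/-- The rank of a set in a matroid: the largest cardinality of an independent subset. -/
noncomputable def Matroid.rk' {α : Type*} (M : Matroid α) (A : Set α) : ℕ :=
  sSup {n : ℕ | ∃ I, I ⊆ A ∧ M.Indep I ∧ I.ncard = n}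

/-- `e` is the minimum element of the set `C`. -/
def IsMinOf {α : Type*} [LinearOrder α] (C : Set α) (e : α) : Prop :=
  e ∈ C ∧ ∀ x ∈ C, e ≤ x

/-- `Int_M(A)`: internally active elements of `A` w.r.t. `M`
(the ground set is the whole type, so `E ∖ A = Aᶜ`). -/
def IntSet {α : Type*} [LinearOrder α] (M : Matroid α) (A : Set α) : Set α :=
  {e | e ∈ A ∧ ∃ C, M.IsCocircuit' C ∧ C ⊆ Aᶜ ∪ {e} ∧ IsMinOf C e}

/-- `Ext_M(A)`: externally active elements w.r.t. `M`. -/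
def ExtSet {α : Type*} [LinearOrder α] (M : Matroid α) (A : Set α) : Set α :=
  {e | e ∉ A ∧ ∃ C, M.IsCircuit' C ∧ C ⊆ A ∪ {e} ∧ IsMinOf C e}

/-- `P_M(A)`: smallest elements of cocircuits of `M` contained in `E ∖ A`. -/
def PActSet {α : Type*} [LinearOrder α] (M : Matroid α) (A : Set α) : Set α :=
  {e | e ∉ A ∧ ∃ C, M.IsCocircuit' C ∧ C ⊆ Aᶜ ∧ IsMinOf C e}

/-- `Q_M(A)`: smallest elements of circuits of `M` contained in `A`. -/
def QActSet {α : Type*} [LinearOrder α] (M : Matroid α) (A : Set α) : Set α :=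
  {e | e ∈ A ∧ ∃ C, M.IsCircuit' C ∧ C ⊆ A ∧ IsMinOf C e}

open Set

namespace Matroid

variable {α : Type*} {M : Matroid α} {A C I : Set α}

lemma IsBasis.rk'_eq_ncard (hI : M.IsBasis I A) (hIfin : I.Finite) : M.rk' A = I.ncard := by
  refine IsGreatest.csSup_eq ⟨⟨I, hI.subset, hI.indep, rfl⟩, ?_⟩
  rintro n ⟨J, hJA, hJ, rfl⟩
  have hJI : J.encard ≤ I.encard := hI.eRk_eq_encard ▸ hJ.encard_le_eRk_of_subset hJA
  have hJfin : J.Finite := Set.finite_of_encard_le_coe (hJI.trans_eq hIfin.cast_ncard_eq.symm)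
  rwa [← hJfin.cast_ncard_eq, ← hIfin.cast_ncard_eq, Nat.cast_le] at hJI

lemma isCircuit'_iff : M.IsCircuit' C ↔ M.IsCircuit C := by
  simp only [IsCircuit', IsCircuit, minimal_iff, eq_comm (a := C)]

variable [LinearOrder α]

lemma mem_qActSet_iff {e : α} :
    e ∈ QActSet M A ↔ e ∈ A ∧ e ∈ M.closure (A ∩ Ioi e) := by
  simp only [QActSet, IsMinOf, mem_ofPred_eq, isCircuit'_iff]
  rw [mem_closure_iff_exists_isCircuit fun he ↦ lt_irrefl e he.2]
  refine and_congr_right fun heA ↦ ⟨?_, ?_⟩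
  · rintro ⟨C, hC, hCA, heC, hmin⟩
    refine ⟨C, fun x hxC ↦ ?_, hC, heC⟩
    obtain rfl | hne := eq_or_ne x e
    · exact mem_insert x _
    · exact Or.inr ⟨hCA hxC, (hmin x hxC).lt_of_ne' hne⟩
  · rintro ⟨C, hCsub, hC, heC⟩
    refine ⟨C, hC, fun x hxC ↦ ?_, heC, fun x hxC ↦ ?_⟩
    · obtain rfl | hx := hCsub hxC
      exacts [heA, hx.1]
    · obtain rfl | hx := hCsub hxC
      exacts [le_rfl, hx.2.le]

def greedyBasis (M : Matroid α) (A : Set α) : Set α :=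
  {e | e ∈ A ∧ e ∉ M.closure (A ∩ Ioi e)}

lemma greedyBasis_subset : greedyBasis M A ⊆ A := fun _ he ↦ he.1

lemma qActSet_eq_diff_greedyBasis : QActSet M A = A \ greedyBasis M A := by
  ext e
  rw [mem_qActSet_iff]
  simp [greedyBasis]

lemma greedyBasis_indep (hA : A.Finite) (hAE : A ⊆ M.E) : M.Indep (greedyBasis M A) := by
  by_contra hnot
  have hdep : M.Dep (greedyBasis M A) := ⟨hnot, greedyBasis_subset.trans hAE⟩
  obtain ⟨C, hCB, hC⟩ := hdep.exists_isCircuit_subset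
  obtain ⟨e, heC, hmin⟩ :=
    C.exists_min_image id ((hA.subset greedyBasis_subset).subset hCB) hC.nonempty
  have hCe : C \ {e} ⊆ A ∩ Ioi e := fun x hx ↦
    ⟨greedyBasis_subset (hCB hx.1), (hmin x hx.1).lt_of_ne' hx.2⟩
  exact (hCB heC).2 (M.closure_subset_closure hCe (hC.mem_closure_sdiff_singleton_of_mem heC))

lemma subset_closure_greedyBasis (hA : A.Finite) (hAE : A ⊆ M.E) :
    A ⊆ M.closure (greedyBasis M A) := by
  intro e heA
  refine (hA.wellFoundedOn (r := (· > ·))).induction heA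
    (P := (· ∈ M.closure (greedyBasis M A))) fun e heA ih ↦ ?_
  by_cases hcl : e ∈ M.closure (A ∩ Ioi e)
  · exact M.closure_subset_closure_of_subset_closure (fun x hx ↦ ih x hx.1 hx.2) hcl
  · exact M.subset_closure _ (greedyBasis_subset.trans hAE) ⟨heA, hcl⟩

lemma greedyBasis_isBasis (hA : A.Finite) (hAE : A ⊆ M.E) : M.IsBasis (greedyBasis M A) A :=
  (greedyBasis_indep hA hAE).isBasis_of_subset_of_subset_closure greedyBasis_subset
    (subset_closure_greedyBasis hA hAE)

theorem ncard_qActSet (hA : A.Finite) (hAE : A ⊆ M.E) :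
    (QActSet M A).ncard = A.ncard - M.rk' A := by
  have hBfin := hA.subset (greedyBasis_subset (M := M))
  rw [qActSet_eq_diff_greedyBasis, ncard_sdiff greedyBasis_subset hBfin,
    (greedyBasis_isBasis hA hAE).rk'_eq_ncard hBfin]

end Matroid

/-- `|Q_M(A)| = |A| − r_M(A)`; in particular it does not depend on the linear order. -/
theorem stmt13 {α : Type*} [Fintype α] [LinearOrder α] (M : Matroid α)
    (hME : M.E = Set.univ) (A : Set α) :
    (QActSet M A).ncard = A.ncard - M.rk' A :=
  Matroid.ncard_qActSet A.toFinite (hME ▸ Set.subset_univ A)
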